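/- Let U_t(z) be a real-valued function on an open set D ⊆ ℂ × (ℂ\{0}) (in variables (z,t)) of the form U_t(z) = Re g(z, u*(z,t)) where g(z,u) = (1/α)Σ_j α_j Log(u−λ_j) + (z−u)²/(2t) (some holomorphic branch) and u*(z,t) is a holomorphic-in-(z,t) solution of ∂_u g(z,u) = 0. Then U satisfies the Hamilton–Jacobi equation ∂_t U_t(z) = −(∂_z U_t(z))², where ∂_z, ∂_t denote Wirtinger derivatives. -/

import Mathlib

/-- The Wirtinger derivative `∂_z f = (∂_x f − i ∂_y f)/2` of a function
`f : ℂ → ℂ`, viewed as real-differentiable. -/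
noncomputable def wirtingerD (f : ℂ → ℂ) (z : ℂ) : ℂ :=
  (fderiv ℝ f z 1 - Complex.I * fderiv ℝ f z Complex.I) / 2

/-!
The saddle equation says `L'(u*) = (z - u*)/t`, i.e. `∂_u g(z, u*) = 0` for
`g(z,u) = L(u) + (z - u)²/(2t)`. So, by the envelope principle, the derivatives of
`z ↦ g(z, u*(z,t))` and `t ↦ g(z, u*(z,t))` are the explicit partials `(z - u*)/t` and
`-(z - u*)²/(2t²)`, whatever the derivatives of `u*` are. For holomorphic `h` the Wirtinger
derivative of `Re h` is `h'/2`, hence `∂_t U = -(z - u*)²/(4t²) = -((z - u*)/(2t))² = -(∂_z U)²`.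
-/

open Filter Topology

lemma wirtingerD_congr {f g : ℂ → ℂ} {z : ℂ} (h : f =ᶠ[𝓝 z] g) :
    wirtingerD f z = wirtingerD g z := by
  rw [wirtingerD, wirtingerD, h.fderiv_eq]

lemma wirtingerD_ofReal_re {h : ℂ → ℂ} {c z : ℂ} (hh : HasDerivAt h c z) :
    wirtingerD (fun w => ((h w).re : ℂ)) z = c / 2 := by
  have hre : HasFDerivAt (fun w => ((h w).re : ℂ))
      ((Complex.ofRealCLM.comp Complex.reCLM).comp
        ((ContinuousLinearMap.smulRight (1 : ℂ →L[ℂ] ℂ) c).restrictScalars ℝ)) z :=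
    (Complex.ofRealCLM.comp Complex.reCLM).hasFDerivAt.comp z
      (hh.hasFDerivAt.restrictScalars ℝ)
  rw [wirtingerD, hre.fderiv]
  simp [Complex.ext_iff]

lemma wirtingerD_ofReal_of_eventuallyEq_re {f : ℂ → ℝ} {h : ℂ → ℂ} {c z : ℂ}
    (hh : HasDerivAt h c z) (hf : ∀ᶠ w in 𝓝 z, f w = (h w).re) :
    wirtingerD (fun w => (f w : ℂ)) z = c / 2 := by
  rw [← wirtingerD_ofReal_re hh]
  exact wirtingerD_congr (hf.mono fun w hw => by simp only [hw])

section SaddleFunction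

variable {𝕜 : Type*} [NontriviallyNormedField 𝕜] [CharZero 𝕜] {L u : 𝕜 → 𝕜} {u' : 𝕜}

def saddleFunction (L : 𝕜 → 𝕜) (z u t : 𝕜) : 𝕜 := L u + (z - u) ^ 2 / (2 * t)

lemma hasDerivAt_saddleFunction_space {z t : 𝕜} (hu : HasDerivAt u u' z)
    (hL : HasDerivAt L ((z - u z) / t) (u z)) :
    HasDerivAt (fun x => saddleFunction L x (u x) t) ((z - u z) / t) z := by
  have hsq : HasDerivAt (fun x => (x - u x) ^ 2) (2 * (z - u z) * (1 - u')) z := by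
    simpa using ((hasDerivAt_id z).sub hu).fun_pow 2
  refine ((hL.comp z hu).fun_add (hsq.div_const (2 * t))).congr_deriv ?_
  field_simp
  ring

lemma hasDerivAt_saddleFunction_time {z t : 𝕜} (ht : t ≠ 0) (hu : HasDerivAt u u' t)
    (hL : HasDerivAt L ((z - u t) / t) (u t)) :
    HasDerivAt (fun s => saddleFunction L z (u s) s) (-(z - u t) ^ 2 / (2 * t ^ 2)) t := by
  have hsq : HasDerivAt (fun s => (z - u s) ^ 2) (2 * (z - u t) * (0 - u')) t := by
    simpa using ((hasDerivAt_const t z).sub hu).fun_pow 2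
  have hden : HasDerivAt (fun s : 𝕜 => 2 * s) 2 t := by
    simpa using (hasDerivAt_id t).const_mul (2 : 𝕜)
  refine ((hL.comp t hu).fun_add (hsq.div hden (mul_ne_zero two_ne_zero ht))).congr_deriv ?_
  field_simp
  ring

end SaddleFunction

theorem hamilton_jacobi_for_log_potential_general
    (d : ℕ) (lam : Fin d → ℂ)
    (a : Fin d → ℝ) (A : ℝ)
    (D : Set (ℂ × ℂ)) (hD : IsOpen D) (htne : ∀ p ∈ D, p.2 ≠ 0)
    (ustar : ℂ → ℂ → ℂ)
    (hu : DifferentiableOn ℂ (fun p : ℂ × ℂ => ustar p.1 p.2) D)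
    (V : Set ℂ)
    (hrange : ∀ p ∈ D, ustar p.1 p.2 ∈ V)
    (L : ℂ → ℂ)
    (hL : ∀ u ∈ V, HasDerivAt L ((1 / (A : ℂ)) * ∑ j, (a j : ℂ) / (u - lam j)) u)
    (hsaddle : ∀ p ∈ D,
      (1 / (A : ℂ)) * ∑ j, (a j : ℂ) / (ustar p.1 p.2 - lam j)
        = (p.1 - ustar p.1 p.2) / p.2)
    (U : ℂ → ℂ → ℝ)
    (hU : ∀ p ∈ D,
      U p.1 p.2 = (L (ustar p.1 p.2) + (p.1 - ustar p.1 p.2) ^ 2 / (2 * p.2)).re) :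
    ∀ p ∈ D,
      wirtingerD (fun t => ((U p.1 t : ℝ) : ℂ)) p.2
        = -(wirtingerD (fun z => ((U z p.2 : ℝ) : ℂ)) p.1) ^ 2 := by
  rintro ⟨z, t⟩ hp
  have hDp : D ∈ 𝓝 (z, t) := hD.mem_nhds hp
  have hdu : DifferentiableAt ℂ (fun q : ℂ × ℂ => ustar q.1 q.2) (z, t) :=
    (hu _ hp).differentiableAt hDp
  have hcrit : HasDerivAt L ((z - ustar z t) / t) (ustar z t) :=
    hsaddle _ hp ▸ hL _ (hrange _ hp)
  have huz : DifferentiableAt ℂ (fun x => ustar x t) z :=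
    hdu.comp (f := fun x => (x, t)) z (by fun_prop)
  have hut : DifferentiableAt ℂ (fun s => ustar z s) t :=
    hdu.comp (f := fun s => (z, s)) t (by fun_prop)
  have hDz : ∀ᶠ x in 𝓝 z, (x, t) ∈ D :=
    (continuous_id.prodMk continuous_const).continuousAt.preimage_mem_nhds hDp
  have hDt : ∀ᶠ s in 𝓝 t, (z, s) ∈ D :=
    (continuous_const.prodMk continuous_id).continuousAt.preimage_mem_nhds hDp
  rw [wirtingerD_ofReal_of_eventuallyEq_re
      (hasDerivAt_saddleFunction_time (htne _ hp) hut.hasDerivAt hcrit)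
      (hDt.mono fun s hs => hU _ hs),
    wirtingerD_ofReal_of_eventuallyEq_re
      (hasDerivAt_saddleFunction_space huz.hasDerivAt hcrit) (hDz.mono fun x hx => hU _ hx)]
  field_simp

/-- Hamilton–Jacobi equation: if `U_t(z) = Re g(z, u*(z,t))` with
`g(z,u) = L(u) + (z−u)²/(2t)` (`L` a holomorphic branch of
`(1/α)Σ_j α_j Log(u−λ_j)`) and `u*(z,t)` a holomorphic-in-`(z,t)` solution of the
saddle point equation `∂_u g = 0`, then `∂_t U_t(z) = −(∂_z U_t(z))²` where
`∂_z, ∂_t` are Wirtinger derivatives. -/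
theorem hamilton_jacobi_for_log_potential
    (d : ℕ) (lam : Fin d → ℂ) (hinj : Function.Injective lam)
    (a : Fin d → ℝ) (hpos : ∀ j, 0 < a j) (A : ℝ) (hA : A = ∑ j, a j)
    (D : Set (ℂ × ℂ)) (hD : IsOpen D) (htne : ∀ p ∈ D, p.2 ≠ 0)
    (ustar : ℂ → ℂ → ℂ)
    (hu : DifferentiableOn ℂ (fun p : ℂ × ℂ => ustar p.1 p.2) D)
    (V : Set ℂ) (hV : IsOpen V) (hVlam : ∀ j, lam j ∉ V)
    (hrange : ∀ p ∈ D, ustar p.1 p.2 ∈ V)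
    (L : ℂ → ℂ)
    (hL : ∀ u ∈ V, HasDerivAt L ((1 / (A : ℂ)) * ∑ j, (a j : ℂ) / (u - lam j)) u)
    (hsaddle : ∀ p ∈ D,
      (1 / (A : ℂ)) * ∑ j, (a j : ℂ) / (ustar p.1 p.2 - lam j)
        = (p.1 - ustar p.1 p.2) / p.2)
    (U : ℂ → ℂ → ℝ)
    (hU : ∀ p ∈ D,
      U p.1 p.2 = (L (ustar p.1 p.2) + (p.1 - ustar p.1 p.2) ^ 2 / (2 * p.2)).re) :
    ∀ p ∈ D,
      wirtingerD (fun t => ((U p.1 t : ℝ) : ℂ)) p.2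
        = -(wirtingerD (fun z => ((U z p.2 : ℝ) : ℂ)) p.1) ^ 2 :=
  hamilton_jacobi_for_log_potential_general d lam a A D hD htne ustar hu V hrange L hL hsaddle U hU
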